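/- arXiv:1410.4753 — 2 statements merged into one kernel-verified Lean document; each statement's English description precedes it below -/
import Mathlib

section
/- Let (X,T) be a compact Hausdorff WAP dynamical system with a transitive point x*. Then (X,T) is coalescent: every continuous surjection π : X → X with π∘T = T∘π is injective, and hence a homeomorphism conjugating T with itself. -/
/-!
Lift `π y = xs` to the enveloping semigroup: since `p ↦ p xs` maps the compact set `E(X,T)`
onto a closed set containing the dense orbit of `xs`, some `p ∈ E(X,T)` has `p xs = y`.
By WAP `p` is continuous, so `π ∘ p` is a continuous map commuting with `T` that fixes the
transitive point `xs`, hence is the identity. As `π` commutes with every element of `E(X,T)`,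
also `p ∘ π = id`, so `p` is a two-sided inverse of `π`.
-/

open Filter Topology

/-- The `n`-th iterate (for `n : ℤ`) of a homeomorphism `T`. -/
def hIter {X : Type*} [TopologicalSpace X] (T : X ≃ₜ X) (n : ℤ) : X → X :=
  fun x => (T.toEquiv ^ n) x

/-- The enveloping semigroup of `(X,T)`: the closure of `{Tⁿ : n ∈ ℤ}` in `X → X` with
the product (pointwise convergence) topology. -/
def envSG {X : Type*} [TopologicalSpace X] (T : X ≃ₜ X) : Set (X → X) :=
  closure (Set.range (hIter T))

section
variable {X : Type*} [TopologicalSpace X] (T : X ≃ₜ X)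

lemma hIter_add_one (n : ℤ) : hIter T (n + 1) = hIter T n ∘ T := by
  ext x; simp [hIter, zpow_add_one]

lemma hIter_sub_one (n : ℤ) : hIter T (n - 1) = hIter T n ∘ T.symm := by
  ext x; simp [hIter, zpow_sub_one]

variable {T}

lemma Function.Commute.hIter {g : X → X} (hg : Function.Commute g T) (n : ℤ) :
    Function.Commute g (hIter T n) := by
  induction n using Int.induction_on with
  | zero => intro x; simp [_root_.hIter]
  | succ k ih => rw [hIter_add_one]; exact ih.comp_right hg
  | pred k ih =>
    rw [hIter_sub_one]
    exact ih.comp_right (hg.inverses_right T.apply_symm_apply T.symm_apply_apply)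

lemma hIter_mem_envSG (n : ℤ) : hIter T n ∈ envSG T :=
  subset_closure (Set.mem_range_self n)

lemma Function.Commute.of_mem_envSG [T2Space X] {g p : X → X} (hgc : Continuous g)
    (hg : Function.Commute g T) (hp : p ∈ envSG T) : Function.Commute g p := fun x =>
  closure_minimal (s := Set.range (_root_.hIter T)) (t := {f : X → X | g (f x) = f (g x)})
    (Set.range_subset_iff.2 fun n => hg.hIter n x)
    (isClosed_eq (hgc.comp (continuous_apply x)) (continuous_apply (g x))) hp

lemma image_eval_envSG_eq_univ [CompactSpace X] [T2Space X] {xs : X}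
    (hxs : Dense (Set.range fun n : ℤ => hIter T n xs)) :
    (fun p : X → X => p xs) '' envSG T = Set.univ := by
  have hclosed : IsClosed ((fun p : X → X => p xs) '' envSG T) :=
    (isClosed_closure.isCompact.image (continuous_apply xs)).isClosed
  refine hclosed.closure_eq ▸ (hxs.mono ?_).closure_eq
  rintro _ ⟨n, rfl⟩
  exact ⟨_, hIter_mem_envSG n, rfl⟩

lemma eq_id_of_commute_of_apply_eq_self [T2Space X] {xs : X}
    (hxs : Dense (Set.range fun n : ℤ => hIter T n xs)) {f : X → X} (hfc : Continuous f)
    (hf : Function.Commute f T) (hfxs : f xs = xs) : f = id := by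
  refine Continuous.ext_on hxs hfc continuous_id ?_
  rintro _ ⟨n, rfl⟩
  simp only [id, (hf.hIter n) xs, hfxs]

end

theorem stmt3_general {X : Type*} [TopologicalSpace X] [CompactSpace X] [T2Space X]
    (T : X ≃ₜ X) (xs : X) (hxs : Dense (Set.range fun n : ℤ => hIter T n xs))
    (hWAP : ∀ p ∈ envSG T, Continuous p)
    (π : X → X) (hcont : Continuous π) (hsurj : Function.Surjective π)
    (hcomm : ∀ x : X, π (T x) = T (π x)) :
    Function.Injective π ∧ ∃ h : X ≃ₜ X, ⇑h = π ∧ ∀ x : X, h (T x) = T (h x) := by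
  obtain ⟨_, ⟨p, hp, rfl⟩, hπp⟩ : ∃ y ∈ (fun p : X → X => p xs) '' envSG T, π y = xs :=
    (hsurj xs).imp fun y hy => ⟨image_eval_envSG_eq_univ hxs ▸ Set.mem_univ y, hy⟩
  have hpT : Function.Commute p T :=
    ((Function.Commute.refl T).of_mem_envSG T.continuous hp).symm
  have hright : Function.RightInverse p π := congrFun <|
    eq_id_of_commute_of_apply_eq_self hxs (hcont.comp (hWAP p hp))
      (Function.Commute.comp_left hcomm hpT) hπp
  have hleft : Function.LeftInverse p π := fun x => by
    rw [← Function.Commute.of_mem_envSG hcont hcomm hp x, hright x]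
  let e : X ≃ X := ⟨π, p, hleft, hright⟩
  exact ⟨hleft.injective, (show Continuous e from hcont).homeoOfEquivCompactToT2, rfl, hcomm⟩

/-- A compact Hausdorff WAP system with a transitive point is coalescent: every continuous
surjective self-map commuting with `T` is injective, hence a self-homeomorphism conjugating
`T` with itself. -/
theorem stmt3 {X : Type*} [TopologicalSpace X] [CompactSpace X] [T2Space X] [Nonempty X]
    (T : X ≃ₜ X) (xs : X) (hxs : Dense (Set.range fun n : ℤ => hIter T n xs))
    (hWAP : ∀ p ∈ envSG T, Continuous p)
    (π : X → X) (hcont : Continuous π) (hsurj : Function.Surjective π)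
    (hcomm : ∀ x : X, π (T x) = T (π x)) :
    Function.Injective π ∧ ∃ h : X ≃ₜ X, ⇑h = π ∧ ∀ x : X, h (T x) = T (h x) :=
  stmt3_general T xs hxs hWAP π hcont hsurj hcomm
end

section
/- Let (X,T) be a compact metric, almost equicontinuous, topologically transitive dynamical system, and let p ∈ A(X,T) be continuous and surjective. Then p is injective, hence a self-homeomorphism of X. Moreover, if a net (T^{n_j}) converges pointwise to p then it converges uniformly to p and (T^{-n_j}) converges uniformly to p^{-1}; in particular p^{-1} ∈ E(X,T), id_X ∈ A(X,T), and E(X,T) = A(X,T) (so (X,T) is weakly rigid). -/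
open Filter Topology

/-- The adherence semigroup of `(X,T)`: the set of limit points of `(Tⁿ)` as `|n| → ∞`. -/
def adhSG {X : Type*} [TopologicalSpace X] (T : X ≃ₜ X) : Set (X → X) :=
  ⋂ N : ℕ, closure {f : X → X | ∃ n : ℤ, (N : ℤ) ≤ |n| ∧ f = hIter T n}

/-- `x` is an equicontinuity point of `(X,T)`. -/
def EquicontinuityPt {X : Type*} [PseudoMetricSpace X] (T : X ≃ₜ X) (x : X) : Prop :=
  ∀ ε > (0 : ℝ), ∃ δ > (0 : ℝ), ∀ y : X, dist x y < δ → ∀ n : ℤ,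
    dist (hIter T n x) (hIter T n y) < ε

/-!
A point `x₀` with dense orbit exists by Baire's theorem. Being a pointwise limit of iterates, `p`
commutes with `T`, so the orbit of `p x₀` is dense too and `p x₀` is an equicontinuity point.
If `Tᵏ x₀` is close to `p x₀`, equicontinuity at `p x₀` keeps `Tᵐ (Tᵏ x₀) = Tᵏ (Tᵐ x₀)` close to
`Tᵐ (p x₀) = p (Tᵐ x₀)` for every `m`, and density of the orbit of `x₀` upgrades this to
`Tᵏ ≈ p` and `T⁻ᵏ ∘ p ≈ id` uniformly. So convergence at the single point `x₀` already forces
uniform convergence, the limit of `T⁻ᵏ` is a left inverse of `p`, and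
`id = lim T⁻ᵏ ∘ p = lim p ∘ T⁻ᵏ` lies in `A(X,T)`, a closed set stable under `f ↦ f ∘ Tᵏ`,
which therefore contains every `Tᵏ` and hence `E(X,T)`.
-/

section
variable {X : Type*} [TopologicalSpace X] (T : X ≃ₜ X)

theorem hIter_eq_coe_zpow (n : ℤ) : hIter T n = ⇑(T ^ n) := by
  let toPerm : (X ≃ₜ X) →* Equiv.Perm X :=
    { toFun := Homeomorph.toEquiv, map_one' := rfl, map_mul' := fun _ _ => rfl }
  funext x
  exact congrArg (· x) (map_zpow toPerm T n).symm

theorem continuous_hIter (n : ℤ) : Continuous (hIter T n) := by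
  rw [hIter_eq_coe_zpow]; exact (T ^ n).continuous

theorem hIter_add (m n : ℤ) : hIter T (m + n) = hIter T m ∘ hIter T n := by
  simp only [hIter_eq_coe_zpow, zpow_add]; rfl

theorem hIter_add_apply (m n : ℤ) (x : X) : hIter T (m + n) x = hIter T m (hIter T n x) := by
  rw [hIter_add]; rfl

theorem hIter_commute (m n : ℤ) : Function.Commute (hIter T m) (hIter T n) := by
  intro x
  rw [← hIter_add_apply, add_comm, hIter_add_apply]

theorem isClosed_adhSG : IsClosed (adhSG T) :=
  isClosed_iInter fun _ => isClosed_closure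

theorem adhSG_subset_envSG : adhSG T ⊆ envSG T := fun _ hf =>
  closure_mono (by rintro _ ⟨n, -, rfl⟩; exact ⟨n, rfl⟩) (Set.mem_iInter.1 hf 0)

theorem comp_hIter_mem_adhSG {f : X → X} (hf : f ∈ adhSG T) (k : ℤ) :
    f ∘ hIter T k ∈ adhSG T := by
  refine Set.mem_iInter.2 fun N => ?_
  refine map_mem_closure (f := (· ∘ hIter T k))
    (continuous_pi fun x => continuous_apply (hIter T k x)) (Set.mem_iInter.1 hf (N + k.natAbs)) ?_
  rintro _ ⟨n, hn, rfl⟩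
  refine ⟨n + k, ?_, (hIter_add T n k).symm⟩
  have := abs_sub_abs_le_abs_sub n (-k)
  rw [abs_neg, sub_neg_eq_add] at this
  push_cast at hn
  omega

theorem envSG_eq_adhSG_of_id_mem (h : id ∈ adhSG T) : envSG T = adhSG T := by
  refine (closure_minimal ?_ (isClosed_adhSG T)).antisymm (adhSG_subset_envSG T)
  rintro _ ⟨k, rfl⟩
  exact comp_hIter_mem_adhSG T h k

theorem commute_hIter_of_mem_envSG [T2Space X] {f : X → X} (hf : f ∈ envSG T) (k : ℤ) :
    Function.Commute f (hIter T k) := by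
  have hclosed : IsClosed {f : X → X | ∀ x, f (hIter T k x) = hIter T k (f x)} := by
    rw [Set.ofPred_forall]
    exact isClosed_iInter fun x => isClosed_eq (continuous_apply _)
      ((continuous_hIter T k).comp (continuous_apply x))
  exact closure_minimal (by rintro _ ⟨n, rfl⟩; exact hIter_commute T n k) hclosed hf

theorem id_mem_adhSG_of_tendsto {ι : Type*} {l : Filter ι} [l.NeBot] {p : X → X} {n : ι → ℤ}
    (hp : p ∈ adhSG T) (hcomm : ∀ k, Function.Commute p (hIter T k))
    (h : Tendsto (fun j => hIter T (-n j) ∘ p) l (𝓝 id)) : id ∈ adhSG T :=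
  (isClosed_adhSG T).mem_of_tendsto h <| Eventually.of_forall fun j =>
    (hcomm (-n j)).comp_eq ▸ comp_hIter_mem_adhSG T hp (-n j)

theorem exists_denseRange_hIter [Nonempty X] [BaireSpace X] [SecondCountableTopology X]
    (htrans : ∀ U V : Set X, IsOpen U → IsOpen V → U.Nonempty → V.Nonempty →
      ∃ n : ℤ, (hIter T n '' U ∩ V).Nonempty) :
    ∃ x, DenseRange fun n => hIter T n x := by
  obtain ⟨b, hbc, hbne, hb⟩ := TopologicalSpace.exists_countable_basis X
  have hdense : ∀ U ∈ b, Dense (⋃ n, hIter T n ⁻¹' U) := by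
    intro U hU
    refine dense_iff_inter_open.2 fun V hV hVne => ?_
    obtain ⟨n, _, ⟨w, hw, rfl⟩, hwU⟩ :=
      htrans V U hV (hb.isOpen hU) hVne (Set.nonempty_iff_ne_empty.2 fun h => hbne (h ▸ hU))
    exact ⟨w, hw, Set.mem_iUnion.2 ⟨n, hwU⟩⟩
  obtain ⟨x, hx⟩ := (dense_biInter_of_isOpen
    (fun U hU => isOpen_iUnion fun n => (hb.isOpen hU).preimage (continuous_hIter T n))
    hbc hdense).nonempty
  refine ⟨x, hb.dense_iff.2 fun U hU _ => ?_⟩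
  obtain ⟨n, hn⟩ := Set.mem_iUnion.1 (Set.mem_iInter₂.1 hx U hU)
  exact ⟨_, hn, n, rfl⟩

end

theorem injective_of_tendsto_comp_eq_id {ι X Y : Type*} [TopologicalSpace X] [T2Space X]
    {l : Filter ι} [l.NeBot] {F : ι → Y → X} {p : X → Y}
    (h : Tendsto (fun j => F j ∘ p) l (𝓝 id)) : Function.Injective p := fun a b hab =>
  tendsto_nhds_unique (tendsto_pi_nhds.1 h a) <| by
    simpa only [Function.comp_apply, id_eq, hab] using tendsto_pi_nhds.1 h b

theorem TendstoUniformly.of_comp_rightInverse {ι X Y : Type*} [UniformSpace X] {l : Filter ι}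
    {F : ι → Y → X} {p : X → Y} {g : Y → X} (hpg : Function.RightInverse g p)
    (h : TendstoUniformly (fun j => F j ∘ p) id l) : TendstoUniformly F g l := by
  simpa only [Function.comp_assoc, hpg.comp_eq_id, Function.comp_id, Function.id_comp]
    using h.comp g

section Metric
variable {X : Type*} [MetricSpace X] (T : X ≃ₜ X)

theorem EquicontinuityPt.of_denseRange_hIter {e z : X} (he : EquicontinuityPt T e)
    (hz : DenseRange fun n => hIter T n z) : EquicontinuityPt T z := by
  intro ε hε
  obtain ⟨δe, hδe, hδe'⟩ := he (ε / 2) (half_pos hε)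
  obtain ⟨m, hm⟩ := hz.exists_mem_open Metric.isOpen_ball ⟨e, Metric.mem_ball_self hδe⟩
  obtain ⟨δ, hδ, hδ'⟩ := Metric.continuous_iff.1 (continuous_hIter T m) z _ (sub_pos.2 hm)
  refine ⟨δ, hδ, fun y hy n => ?_⟩
  have hmy : dist (hIter T m y) e < δe := by
    have := hδ' y (by rwa [dist_comm])
    calc dist (hIter T m y) e ≤ dist (hIter T m y) (hIter T m z) + dist (hIter T m z) e :=
          dist_triangle _ _ _
      _ < δe := by linarith
  have key : ∀ k, dist (hIter T k (hIter T m z)) (hIter T k (hIter T m y)) < ε := fun k =>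
    calc _ ≤ dist (hIter T k e) (hIter T k (hIter T m z)) +
          dist (hIter T k e) (hIter T k (hIter T m y)) := dist_triangle_left _ _ _
      _ < ε / 2 + ε / 2 :=
          add_lt_add (hδe' _ (by rwa [dist_comm]) k) (hδe' _ (by rwa [dist_comm]) k)
      _ = ε := add_halves ε
  simpa only [← hIter_add_apply, sub_add_cancel] using key (n - m)

variable {p : X → X} {x₀ : X}

theorem dist_hIter_le_of_dist_lt (hp : Continuous p)
    (hcomm : ∀ k, Function.Commute p (hIter T k)) (hx₀ : DenseRange fun n => hIter T n x₀)
    {ε δ : ℝ} (hδ : ∀ y, dist (p x₀) y < δ → ∀ n, dist (hIter T n (p x₀)) (hIter T n y) < ε)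
    {k : ℤ} (hk : dist (hIter T k x₀) (p x₀) < δ) :
    (∀ u, dist (hIter T k u) (p u) ≤ ε) ∧ ∀ u, dist (hIter T (-k) (p u)) u ≤ ε := by
  have horbit : ∀ m, dist (hIter T m (p x₀)) (hIter T m (hIter T k x₀)) < ε :=
    hδ _ (by rwa [dist_comm])
  constructor
  · refine fun u => hx₀.induction_on u
      (isClosed_le ((continuous_hIter T k).dist hp) continuous_const) fun m => ?_
    rw [hIter_commute T k m, hcomm m, dist_comm]
    exact (horbit m).le
  · refine fun u => hx₀.induction_on u
      (isClosed_le (((continuous_hIter T (-k)).comp hp).dist continuous_id) continuous_const)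
      fun m => ?_
    have h₁ : hIter T (-k) (p (hIter T m x₀)) = hIter T (m - k) (p x₀) := by
      rw [hcomm m, ← hIter_add_apply, neg_add_eq_sub]
    have h₂ : hIter T m x₀ = hIter T (m - k) (hIter T k x₀) := by
      rw [← hIter_add_apply, sub_add_cancel]
    rw [h₁, h₂]
    exact (horbit (m - k)).le

theorem tendstoUniformly_hIter_of_tendsto_apply (hp : Continuous p)
    (hcomm : ∀ k, Function.Commute p (hIter T k)) (hx₀ : DenseRange fun n => hIter T n x₀)
    (hpx₀ : EquicontinuityPt T (p x₀)) {ι : Type*} {l : Filter ι} {n : ι → ℤ}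
    (h : Tendsto (fun j => hIter T (n j) x₀) l (𝓝 (p x₀))) :
    TendstoUniformly (fun j => hIter T (n j)) p l ∧
      TendstoUniformly (fun j => hIter T (-n j) ∘ p) id l := by
  have bounds : ∀ ε > 0, ∀ᶠ j in l, (∀ u, dist (hIter T (n j) u) (p u) ≤ ε) ∧
      ∀ u, dist (hIter T (-n j) (p u)) u ≤ ε := by
    intro ε hε
    obtain ⟨δ, hδ, hδ'⟩ := hpx₀ ε hε
    filter_upwards [Metric.tendsto_nhds.1 h δ hδ] with j hj
    exact dist_hIter_le_of_dist_lt T hp hcomm hx₀ hδ' hj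
  constructor <;> refine Metric.tendstoUniformly_iff.2 fun ε hε => ?_ <;>
    filter_upwards [bounds (ε / 2) (half_pos hε)] with j hj u <;> rw [dist_comm]
  · exact (hj.1 u).trans_lt (half_lt_self hε)
  · exact (hj.2 u).trans_lt (half_lt_self hε)

end Metric

/-- A compact metric, almost equicontinuous, topologically transitive system: every continuous
surjective element `p` of the adherence semigroup is injective (hence a self-homeomorphism);
any net of iterates converging pointwise to `p` converges uniformly to `p`, the inverse
iterates converge uniformly to `p⁻¹`, and `p⁻¹ ∈ E(X,T)`, `id ∈ A(X,T)`, `E(X,T) = A(X,T)`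
(so the system is weakly rigid). -/
theorem stmt4 {X : Type*} [MetricSpace X] [CompactSpace X] [Nonempty X]
    (T : X ≃ₜ X)
    (hAE : Dense {x : X | EquicontinuityPt T x})
    (htrans : ∀ U V : Set X, IsOpen U → IsOpen V → U.Nonempty → V.Nonempty →
      ∃ n : ℤ, (hIter T n '' U ∩ V).Nonempty)
    (p : X → X) (hp : p ∈ adhSG T) (hcont : Continuous p) (hsurj : Function.Surjective p) :
    Function.Injective p ∧
    ∃ g : X → X, Function.LeftInverse g p ∧ Function.RightInverse g p ∧
      g ∈ envSG T ∧ id ∈ adhSG T ∧ envSG T = adhSG T ∧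
      ∀ {ι : Type} (l : Filter ι) (n : ι → ℤ),
        Tendsto (fun j => hIter T (n j)) l (nhds p) →
          TendstoUniformly (fun j => hIter T (n j)) p l ∧
          TendstoUniformly (fun j => hIter T (-(n j))) g l := by
  obtain ⟨x₀, hx₀⟩ := exists_denseRange_hIter T htrans
  have hpE : p ∈ envSG T := adhSG_subset_envSG T hp
  have hcomm := commute_hIter_of_mem_envSG T hpE
  have hpx₀ : DenseRange fun n => hIter T n (p x₀) := by
    simpa only [Function.comp_def, hcomm _ x₀] using hsurj.denseRange.comp hx₀ hcont
  obtain ⟨e, he⟩ := hAE.nonempty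
  have hunif {ι : Type} {l : Filter ι} {n : ι → ℤ} :=
    tendstoUniformly_hIter_of_tendsto_apply T hcont hcomm hx₀ (he.of_denseRange_hIter T hpx₀)
      (l := l) (n := n)
  let l := comap (hIter T) (𝓝 p)
  have : l.NeBot := comap_neBot fun t ht =>
    let ⟨_, hy, n, hn⟩ := mem_closure_iff_nhds.1 hpE t ht; ⟨n, hn ▸ hy⟩
  have hinv := (hunif (n := id) (tendsto_pi_nhds.1 (tendsto_comap (f := hIter T)) x₀)).2
  have hinj : Function.Injective p :=
    injective_of_tendsto_comp_eq_id (tendsto_pi_nhds.2 hinv.tendsto_at)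
  have hpg := Function.rightInverse_surjInv hsurj
  have hid : id ∈ adhSG T :=
    id_mem_adhSG_of_tendsto T hp hcomm (tendsto_pi_nhds.2 hinv.tendsto_at)
  refine ⟨hinj, _, Function.leftInverse_surjInv ⟨hinj, hsurj⟩, hpg, ?_, hid,
    envSG_eq_adhSG_of_id_mem T hid, fun l n h => ?_⟩
  · exact mem_closure_of_tendsto (tendsto_pi_nhds.2 (hinv.of_comp_rightInverse hpg).tendsto_at)
      (Eventually.of_forall fun j => ⟨_, rfl⟩)
  · obtain ⟨h₁, h₂⟩ := hunif (tendsto_pi_nhds.1 h x₀)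
    exact ⟨h₁, h₂.of_comp_rightInverse hpg⟩
end
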